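/- Let (C, J) be a small site such that the Grothendieck topos Sh(C,J) of Type-valued sheaves is locally connected, with Π₀ the left adjoint of the constant sheaf functor Δ : Type → Sh(C,J). If E is an object of Sh(C,J) isomorphic to a coproduct ∐_{i∈I} U_i in which every U_i is connected, then Π₀(E) is in bijection with the index set I. -/

import Mathlib

open CategoryTheory CategoryTheory.Limits Opposite

universe u

/-- An object `E` of a category with binary coproducts is *connected* if whenever
`E` is isomorphic to a coproduct `U ⨿ V`, exactly one of `U` and `V` is not an
initial object. -/
def IsConnectedObject {D : Type*} [Category D] [HasBinaryCoproducts D] (E : D) : Prop :=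
  ∀ (U V : D), (E ≅ U ⨿ V) →
    Xor' (¬ Nonempty (IsInitial U)) (¬ Nonempty (IsInitial V))

instance sheafTypeHasColimits {C : Type u} [SmallCategory C] (J : GrothendieckTopology C) :
    HasColimits (Sheaf J (Type u)) :=
  Sheaf.instHasColimitsOfSize


/-!
`Π₀` is a left adjoint, so it sends `∐ U` to the disjoint union `Σ i, Π₀ (U i)`, and it suffices
to see that `Π₀ V` is a point for connected `V`. A map `Π₀ V → X ⊕ Y` is the same as a map
`V ⟶ Δ (X ⊕ Y) ≅ Δ X ⨿ Δ Y`; since a sheaf topos is extensive, pulling the coproduct back along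
it splits `V` into two summands, one of which must be initial, so the map factors through `X` or
through `Y`. Separating two points of `Π₀ V` this way shows that `Π₀ V` is a subsingleton. If
`Π₀ V` were empty, `V` would map to the initial object `Δ ∅`, and would be initial itself
because initial objects of an extensive category are strict.
-/

namespace IsConnectedObject

variable {D : Type*} [Category D]

lemma not_isInitial [HasBinaryCoproducts D] {V : D} (hV : IsConnectedObject V) :
    ¬ Nonempty (IsInitial V) := by
  rintro ⟨h⟩
  have e : V ≅ V ⨿ V :=
    { hom := coprod.inl
      inv := coprod.desc (𝟙 V) (h.to V)
      hom_inv_id := coprod.inl_desc _ _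
      inv_hom_id := coprod.hom_ext (by rw [coprod.inl_desc_assoc, Category.id_comp,
        Category.comp_id]) (h.hom_ext _ _) }
  rcases hV V V e with ⟨hA, hnA⟩ | ⟨hA, hnA⟩ <;> exact hnA hA

lemma isInitial_or_isInitial [HasBinaryCoproducts D] {V P Q : D} (hV : IsConnectedObject V)
    (e : V ≅ P ⨿ Q) : Nonempty (IsInitial P) ∨ Nonempty (IsInitial Q) := by
  rcases hV P Q e with ⟨-, hQ⟩ | ⟨-, hP⟩
  exacts [.inr (not_not.mp hQ), .inl (not_not.mp hP)]

lemma exists_lift_inl_or_inr [FinitaryExtensive D] {V A B : D} (hV : IsConnectedObject V)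
    (g : V ⟶ A ⨿ B) :
    (∃ h : V ⟶ A, h ≫ coprod.inl = g) ∨ ∃ h : V ⟶ B, h ≫ coprod.inr = g := by
  have hl := IsPullback.of_hasPullback g (coprod.inl : A ⟶ A ⨿ B)
  have hr := IsPullback.of_hasPullback g (coprod.inr : B ⟶ A ⨿ B)
  obtain ⟨hsplit⟩ := ((BinaryCofan.isVanKampen_iff _).mp
    (FinitaryExtensive.vanKampen _ (coprodIsCoprod A B))
    (BinaryCofan.mk (pullback.fst g _) (pullback.fst g _)) _ _ g hl.w.symm hr.w.symm).mpr
      ⟨hl, hr⟩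
  rcases hV.isInitial_or_isInitial (hsplit.coconePointUniqueUpToIso (colimit.isColimit _)) with
    ⟨⟨hP⟩⟩ | ⟨⟨hQ⟩⟩
  · have : IsIso (pullback.fst g coprod.inr) :=
      (BinaryCofan.isColimit_iff_isIso_inr hP _).mp ⟨hsplit⟩
    exact .inr ⟨inv (pullback.fst g coprod.inr) ≫ pullback.snd g coprod.inr, by
      simp [← pullback.condition]⟩
  · have : IsIso (pullback.fst g coprod.inl) :=
      (BinaryCofan.isColimit_iff_isIso_inl hQ _).mp ⟨hsplit⟩
    exact .inl ⟨inv (pullback.fst g coprod.inl) ≫ pullback.snd g coprod.inl, by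
      simp [← pullback.condition]⟩

lemma exists_lift_of_isColimit [FinitaryExtensive D] {V A B W : D} (hV : IsConnectedObject V)
    {i : A ⟶ W} {j : B ⟶ W} (hc : IsColimit (BinaryCofan.mk i j)) (g : V ⟶ W) :
    (∃ h : V ⟶ A, h ≫ i = g) ∨ ∃ h : V ⟶ B, h ≫ j = g := by
  let e : W ≅ A ⨿ B := hc.coconePointUniqueUpToIso (colimit.isColimit _)
  have hi : coprod.inl ≫ e.inv = i := hc.comp_coconePointUniqueUpToIso_inv _ ⟨.left⟩
  have hj : coprod.inr ≫ e.inv = j := hc.comp_coconePointUniqueUpToIso_inv _ ⟨.right⟩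
  rcases hV.exists_lift_inl_or_inr (g ≫ e.hom) with ⟨h, hh⟩ | ⟨h, hh⟩
  · exact .inl ⟨h, by rw [← hi, reassoc_of% hh, e.hom_inv_id, Category.comp_id]⟩
  · exact .inr ⟨h, by rw [← hj, reassoc_of% hh, e.hom_inv_id, Category.comp_id]⟩

end IsConnectedObject

namespace CategoryTheory.Adjunction

variable {D E : Type*} [Category D] [Category E] {V : D}

lemma exists_lift_of_isConnectedObject {L : D ⥤ E} {R : E ⥤ D} [FinitaryExtensive D]
    [PreservesColimitsOfShape (Discrete WalkingPair) R] (adj : L ⊣ R) (hV : IsConnectedObject V)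
    {X Y W : E} {i : X ⟶ W} {j : Y ⟶ W} (hc : IsColimit (BinaryCofan.mk i j))
    (χ : L.obj V ⟶ W) :
    (∃ ψ : L.obj V ⟶ X, ψ ≫ i = χ) ∨ ∃ ψ : L.obj V ⟶ Y, ψ ≫ j = χ := by
  rcases hV.exists_lift_of_isColimit (mapIsColimitOfPreservesOfIsColimit R i j hc)
    (adj.homEquiv _ _ χ) with ⟨h, hh⟩ | ⟨h, hh⟩
  · exact .inl ⟨(adj.homEquiv _ _).symm h, by
      rw [← homEquiv_naturality_right_symm, hh, Equiv.symm_apply_apply]⟩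
  · exact .inr ⟨(adj.homEquiv _ _).symm h, by
      rw [← homEquiv_naturality_right_symm, hh, Equiv.symm_apply_apply]⟩

lemma subsingleton_obj_of_isConnectedObject {L : D ⥤ Type u} {R : Type u ⥤ D}
    [FinitaryExtensive D] [PreservesColimitsOfShape (Discrete WalkingPair) R] (adj : L ⊣ R)
    (hV : IsConnectedObject V) : Subsingleton (L.obj V) := by
  classical
  refine ⟨fun x y => ?_⟩
  let χ : L.obj V ⟶ PUnit.{u + 1} ⊕ PUnit.{u + 1} :=
    TypeCat.ofHom fun a => if a = x then .inl ⟨⟩ else .inr ⟨⟩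
  rcases adj.exists_lift_of_isConnectedObject hV (Types.binaryCoproductColimit _ _) χ with
    ⟨ψ, hψ⟩ | ⟨ψ, hψ⟩
  · simpa [χ, eq_comm] using ConcreteCategory.congr_hom hψ y
  · simpa [χ] using ConcreteCategory.congr_hom hψ x

lemma nonempty_obj_of_isConnectedObject {L : D ⥤ Type u} {R : Type u ⥤ D}
    [HasBinaryCoproducts D] [HasStrictInitialObjects D]
    [PreservesColimit (Functor.empty.{0} (Type u)) R] (adj : L ⊣ R)
    (hV : IsConnectedObject V) : Nonempty (L.obj V) := by
  by_contra h
  rw [not_nonempty_iff] at h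
  exact hV.not_isInitial ⟨IsInitial.ofStrict (adj.homEquiv _ _ (TypeCat.ofHom h.elim))
    (IsInitial.isInitialObj R _ Types.isInitialPEmpty)⟩

end CategoryTheory.Adjunction

/-- In a locally connected Grothendieck topos `Sh(C,J)` (i.e. the constant sheaf
functor `Δ : Type → Sh(C,J)` has a left adjoint `Π₀`), if an object `E` is
isomorphic to a coproduct `∐ᵢ Uᵢ` of connected objects, then `Π₀(E)` is in
bijection with the index set `I`. -/
theorem pi0_of_coproduct_of_connected
    {C : Type u} [SmallCategory C] (J : GrothendieckTopology C)
    (Pi0 : Sheaf J (Type u) ⥤ Type u) (adj : Pi0 ⊣ constantSheaf J (Type u))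
    (E : Sheaf J (Type u)) {I : Type u} (U : I → Sheaf J (Type u))
    (hU : ∀ i, IsConnectedObject (U i)) (e : E ≅ ∐ U) :
    Nonempty (Pi0.obj E ≃ I) := by
  have : PreservesColimitsOfSize.{u, u} Pi0 := adj.leftAdjoint_preservesColimits
  have hunique (i : I) : Unique (Pi0.obj (U i)) :=
    have := adj.subsingleton_obj_of_isConnectedObject (hU i)
    uniqueOfSubsingleton (adj.nonempty_obj_of_isConnectedObject (hU i)).some
  exact ⟨(Pi0.mapIso e ≪≫ PreservesCoproduct.iso Pi0 U ≪≫ Types.coproductIso _).toEquiv.trans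
    ((Equiv.sigmaCongrRight fun i => Equiv.ofUnique _ PUnit.{u + 1}).trans (Equiv.sigmaPUnit I))⟩
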